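/- Let 0 < β ≤ 1/2 and 0 ≤ α ≤ β/2, and let A = {a_1 < a_2 < ...} and B = {b_1 < b_2 < ...} be two infinite subsets of ℕ such that (1) a_i − b_i = o(a_i^{β−α}) as i → ∞; (2) A(n) − B(n) = O(n^{α}); and (3) there is a constant c > 0 with A(n) ≤ c·n^{β} and B(n) ≤ c·n^{β} for all n ∈ ℕ. Then Σ_{n ≤ x} ( Σ_{a ∈ A, a ≤ n} a − Σ_{b ∈ B, b ≤ n} b )^2 = o(x^{2+2β}) as x → ∞. -/

import Mathlib

/-!
Write `D(n) = A(n) - B(n)`. Summation by parts turns `∑_{a ≤ n} a - ∑_{b ≤ n} b` into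
`(n + 1) D(n) - ∑_{m ≤ n} D(m)`, so everything is controlled by `∑_{n ≤ x} |D(n)|`.
Since `D(n) = ∑_i ([a_i ≤ n] - [b_i ≤ n])`, that sum is at most `∑_{i < K(x)} |a_i - b_i|` with
`K(x) = max (A(x), B(x)) = O(x^β)`, and by (1) each of these terms is `o(x^(β-α))`: hence
`∑_{n ≤ x} |D(n)| = o(x^(2β-α))`. The weighted term contributes
`x² · O(x^α) · o(x^(2β-α))` and the partial sums `x · o(x^(2β-α))²`, both `o(x^(2+2β))`,
the latter because `β ≤ 1/2`.
-/

open Filter Asymptotics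

/-- The counting function `A(n) = |{a ∈ A : a ≤ n}|`. -/
noncomputable def countFn (A : Set ℕ) (n : ℕ) : ℕ := (A ∩ Set.Iic n).ncard

/-- `∑_{a ∈ A, a ≤ n} a`, as a real number. -/
noncomputable def sumFn (A : Set ℕ) (n : ℕ) : ℝ :=
  ∑ a ∈ Finset.range (n + 1), Set.indicator A (fun x => (x : ℝ)) a

open Finset

lemma countFn_eq_count (A : Set ℕ) [DecidablePred (· ∈ A)] (n : ℕ) :
    countFn A n = Nat.count (· ∈ A) (n + 1) := by
  rw [Nat.count_eq_card_filter_range, countFn, ← Set.ncard_coe_finset]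
  congr 1
  ext a
  simp [and_comm]

lemma countFn_mono (A : Set ℕ) : Monotone (countFn A) := fun _ n h =>
  Set.ncard_le_ncard (Set.inter_subset_inter_right A (Set.Iic_subset_Iic.2 h))
    ((Set.finite_Iic n).inter_of_right A)

lemma countFn_succ (A : Set ℕ) [DecidablePred (· ∈ A)] (n : ℕ) :
    countFn A (n + 1) = countFn A n + if n + 1 ∈ A then 1 else 0 := by
  rw [countFn_eq_count, countFn_eq_count, Nat.count_succ]

lemma nth_le_of_lt_countFn {A : Set ℕ} {i n : ℕ} (h : i < countFn A n) :
    Nat.nth (· ∈ A) i ≤ n := by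
  classical
  rw [countFn_eq_count] at h
  exact Nat.lt_succ_iff.1 (Nat.nth_lt_of_lt_count h)

lemma nth_le_iff_lt_countFn {A : Set ℕ} (hA : A.Infinite) {i n : ℕ} :
    Nat.nth (· ∈ A) i ≤ n ↔ i < countFn A n := by
  classical
  rw [countFn_eq_count, Nat.lt_nth_iff_count_lt (p := (· ∈ A)) hA, Nat.lt_succ_iff]

lemma countFn_eq_sum_nth {A : Set ℕ} (hA : A.Infinite) {n K : ℕ} (hK : countFn A n ≤ K) :
    (countFn A n : ℝ) = ∑ i ∈ range K, if Nat.nth (· ∈ A) i ≤ n then 1 else 0 := by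
  have : (range K).filter (fun i => Nat.nth (· ∈ A) i ≤ n) = range (countFn A n) := by
    ext i
    simp only [mem_filter, mem_range, nth_le_iff_lt_countFn hA]
    omega
  rw [sum_boole, this, card_range]

lemma sumFn_eq_mul_countFn_sub_sum (A : Set ℕ) (n : ℕ) :
    sumFn A n = (n + 1) * countFn A n - ∑ m ∈ range (n + 1), (countFn A m : ℝ) := by
  classical
  induction n with
  | zero => simp [sumFn]
  | succ n ih =>
    rw [sumFn, sum_range_succ, ← sumFn, ih, sum_range_succ _ (n + 1), countFn_succ,
      Set.indicator_apply]
    split_ifs <;> push_cast <;> ring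

lemma sum_range_abs_indicator_sub_le (a b x : ℕ) :
    ∑ n ∈ range (x + 1), |(if a ≤ n then (1 : ℝ) else 0) - if b ≤ n then 1 else 0|
      ≤ |(a : ℝ) - b| := by
  wlog hab : a ≤ b generalizing a b
  · simpa only [abs_sub_comm] using this b a (by omega)
  have hterm : ∀ n, |(if a ≤ n then (1 : ℝ) else 0) - if b ≤ n then 1 else 0|
      = if n ∈ Ico a b then 1 else 0 := by
    intro n
    simp only [mem_Ico]
    split_ifs <;> norm_num <;> omega
  rw [sum_congr rfl fun n _ => hterm n, sum_boole, abs_sub_comm,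
    abs_of_nonneg (sub_nonneg.2 (by exact_mod_cast hab)), ← Nat.cast_sub hab, ← Nat.card_Ico]
  exact_mod_cast card_le_card fun n hn => (mem_filter.1 hn).2

lemma sum_abs_countFn_sub_le {A B : Set ℕ} (hA : A.Infinite) (hB : B.Infinite) (x : ℕ) :
    ∑ n ∈ range (x + 1), |(countFn A n : ℝ) - countFn B n|
      ≤ ∑ i ∈ range (max (countFn A x) (countFn B x)),
          |(Nat.nth (· ∈ A) i : ℝ) - Nat.nth (· ∈ B) i| := by
  set K := max (countFn A x) (countFn B x)
  have hdiff : ∀ n ∈ range (x + 1), (countFn A n : ℝ) - countFn B n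
      = ∑ i ∈ range K, ((if Nat.nth (· ∈ A) i ≤ n then (1 : ℝ) else 0)
          - if Nat.nth (· ∈ B) i ≤ n then 1 else 0) := by
    intro n hn
    have hnx : n ≤ x := Nat.lt_succ_iff.1 (mem_range.1 hn)
    rw [sum_sub_distrib,
      ← countFn_eq_sum_nth hA ((countFn_mono A hnx).trans (le_max_left _ _)),
      ← countFn_eq_sum_nth hB ((countFn_mono B hnx).trans (le_max_right _ _))]
  calc ∑ n ∈ range (x + 1), |(countFn A n : ℝ) - countFn B n|
      ≤ ∑ n ∈ range (x + 1), ∑ i ∈ range K, |(if Nat.nth (· ∈ A) i ≤ n then (1 : ℝ) else 0)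
          - if Nat.nth (· ∈ B) i ≤ n then 1 else 0| :=
        sum_le_sum fun n hn => hdiff n hn ▸ abs_sum_le_sum_abs _ _
    _ = ∑ i ∈ range K, ∑ n ∈ range (x + 1), |(if Nat.nth (· ∈ A) i ≤ n then (1 : ℝ) else 0)
          - if Nat.nth (· ∈ B) i ≤ n then 1 else 0| := sum_comm
    _ ≤ _ := sum_le_sum fun i _ => sum_range_abs_indicator_sub_le _ _ x

lemma natCast_rpow_le_self {p : ℝ} (hp0 : 0 < p) (hp1 : p ≤ 1) (n : ℕ) : (n : ℝ) ^ p ≤ n := by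
  rcases Nat.eq_zero_or_pos n with rfl | hn
  · simp [Real.zero_rpow hp0.ne']
  · exact Real.rpow_le_self_of_one_le (by exact_mod_cast hn) hp1

lemma eventually_le_two_mul_of_isLittleO {ι : Type*} {l : Filter ι} {u v : ι → ℕ} {p : ℝ}
    (hp0 : 0 < p) (hp1 : p ≤ 1)
    (h : (fun i => (u i : ℝ) - v i) =o[l] fun i => (u i : ℝ) ^ p) :
    ∀ᶠ i in l, u i ≤ 2 * v i := by
  filter_upwards [h.def (by norm_num : (0 : ℝ) < 1 / 2)] with i hi
  rw [Real.norm_eq_abs, Real.norm_of_nonneg (by positivity)] at hi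
  have := natCast_rpow_le_self hp0 hp1 (u i)
  have := le_abs_self ((u i : ℝ) - v i)
  exact_mod_cast (by linarith : (u i : ℝ) ≤ 2 * v i)

lemma sum_range_le_sum_range_add_mul {f : ℕ → ℝ} (hf : ∀ i, 0 ≤ f i) {N K : ℕ} {M : ℝ}
    (hM : 0 ≤ M) (h : ∀ i, N ≤ i → i < K → f i ≤ M) :
    ∑ i ∈ range K, f i ≤ ∑ i ∈ range N, f i + K * M := by
  rw [← sum_filter_add_sum_filter_not (range K) (· < N)]
  refine add_le_add ?_ ?_
  · exact sum_le_sum_of_subset_of_nonneg (fun i hi => by simp_all) fun i _ _ => hf i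
  · refine (sum_le_card_nsmul _ _ M fun i hi => ?_).trans ?_
    · simp only [mem_filter, mem_range, not_lt] at hi
      exact h i hi.2 hi.1
    · rw [nsmul_eq_mul]
      gcongr
      exact_mod_cast (card_filter_le _ _).trans (card_range K).le

lemma min_nth_le_of_lt_max_countFn {A B : Set ℕ} {i x : ℕ}
    (h : i < max (countFn A x) (countFn B x)) :
    min (Nat.nth (· ∈ A) i) (Nat.nth (· ∈ B) i) ≤ x := by
  rcases lt_max_iff.1 h with h | h
  · exact min_le_of_left_le (nth_le_of_lt_countFn h)
  · exact min_le_of_right_le (nth_le_of_lt_countFn h)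

lemma abs_sub_le_of_le_two_mul {a b x : ℕ} {ε p : ℝ} (hε : 0 ≤ ε) (hp0 : 0 ≤ p) (hp1 : p ≤ 1)
    (hdiff : |(a : ℝ) - b| ≤ ε * (a : ℝ) ^ p) (hab : a ≤ 2 * b) (hx : min a b ≤ x) :
    |(a : ℝ) - b| ≤ ε * (2 * (x : ℝ) ^ p) := by
  have hax : a ≤ 2 * x := by omega
  calc |(a : ℝ) - b| ≤ ε * (a : ℝ) ^ p := hdiff
    _ ≤ ε * (2 * x : ℝ) ^ p := by gcongr; exact_mod_cast hax
    _ = ε * (2 ^ p * (x : ℝ) ^ p) := by rw [Real.mul_rpow (by norm_num) (by positivity)]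
    _ ≤ ε * (2 * (x : ℝ) ^ p) := by
      gcongr
      exact Real.rpow_le_self_of_one_le (by norm_num) hp1

theorem isLittleO_sum_abs_nth_sub {A B : Set ℕ} {β p : ℝ} (hβ : 0 ≤ β) (hp0 : 0 < p)
    (hp1 : p ≤ 1)
    (h1 : (fun i : ℕ => (Nat.nth (· ∈ A) i : ℝ) - Nat.nth (· ∈ B) i)
      =o[atTop] fun i : ℕ => (Nat.nth (· ∈ A) i : ℝ) ^ p)
    (hK : (fun x : ℕ => (max (countFn A x) (countFn B x) : ℝ))
      =O[atTop] fun x : ℕ => (x : ℝ) ^ β) :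
    (fun x : ℕ => ∑ i ∈ range (max (countFn A x) (countFn B x)),
        |(Nat.nth (· ∈ A) i : ℝ) - Nat.nth (· ∈ B) i|)
      =o[atTop] fun x : ℕ => (x : ℝ) ^ (β + p) := by
  set a := Nat.nth (· ∈ A)
  set b := Nat.nth (· ∈ B)
  rw [isLittleO_iff]
  intro ε hε
  obtain ⟨C, hC, hKC⟩ := hK.exists_pos
  set ε' := ε / (4 * C) with hε'_def
  obtain ⟨N, hN⟩ := eventually_atTop.1
    ((h1.def (by positivity : 0 < ε')).and (eventually_le_two_mul_of_isLittleO hp0 hp1 h1))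
  have htail : ∀ x i, N ≤ i → i < max (countFn A x) (countFn B x) →
      |(a i : ℝ) - b i| ≤ ε' * (2 * (x : ℝ) ^ p) := by
    intro x i hi hiK
    obtain ⟨hdiff, hab⟩ := hN i hi
    rw [Real.norm_eq_abs, Real.norm_of_nonneg (by positivity)] at hdiff
    exact abs_sub_le_of_le_two_mul (by positivity) hp0.le hp1 hdiff hab
      (min_nth_le_of_lt_max_countFn hiK)
  have hhead : ∀ᶠ x : ℕ in atTop,
      ‖∑ i ∈ range N, |(a i : ℝ) - b i|‖ ≤ ε / 2 * ‖(x : ℝ) ^ (β + p)‖ :=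
    (isLittleO_const_left.2 <| Or.inr <| tendsto_norm_atTop_atTop.comp <|
      (tendsto_rpow_atTop (by linarith)).comp tendsto_natCast_atTop_atTop).def (by positivity)
  filter_upwards [hKC.bound, hhead, eventually_gt_atTop 0] with x hKx hhead hx
  have hx : (0 : ℝ) < x := Nat.cast_pos.2 hx
  rw [Real.norm_of_nonneg (by positivity), Real.norm_of_nonneg (by positivity)] at hKx
  rw [Real.norm_of_nonneg (by positivity), Real.norm_of_nonneg (by positivity)] at hhead
  rw [Real.norm_of_nonneg (by positivity), Real.norm_of_nonneg (by positivity)]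
  calc ∑ i ∈ range (max (countFn A x) (countFn B x)), |(a i : ℝ) - b i|
      ≤ ∑ i ∈ range N, |(a i : ℝ) - b i|
          + (max (countFn A x) (countFn B x) : ℕ) * (ε' * (2 * (x : ℝ) ^ p)) :=
        sum_range_le_sum_range_add_mul (fun _ => abs_nonneg _) (by positivity) (htail x)
    _ ≤ ε / 2 * (x : ℝ) ^ (β + p) + C * (x : ℝ) ^ β * (ε' * (2 * (x : ℝ) ^ p)) := by
        gcongr
        exact_mod_cast hKx
    _ = ε * (x : ℝ) ^ (β + p) := by
        rw [Real.rpow_add hx, hε'_def]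
        field_simp
        ring

lemma sum_sq_succ_mul_sub_sum_le {d : ℕ → ℝ} {C α : ℝ} (hα : 0 ≤ α)
    (hC : ∀ n, |d n| ≤ C * ((n : ℝ) + 1) ^ α) (x : ℕ) :
    ∑ n ∈ range (x + 1), ((n + 1) * d n - ∑ m ∈ range (n + 1), d m) ^ 2
      ≤ 2 * C * ((x : ℝ) + 1) ^ (2 + α) * ∑ n ∈ range (x + 1), |d n|
        + 2 * ((x : ℝ) + 1) * (∑ n ∈ range (x + 1), |d n|) ^ 2 := by
  set T := ∑ n ∈ range (x + 1), |d n|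
  have hC0 : 0 ≤ C := by simpa using (abs_nonneg _).trans (hC 0)
  have hterm : ∀ n ∈ range (x + 1), ((n + 1) * d n - ∑ m ∈ range (n + 1), d m) ^ 2
      ≤ 2 * C * ((x : ℝ) + 1) ^ (2 + α) * |d n| + 2 * T ^ 2 := by
    intro n hn
    have hnx : (n : ℝ) + 1 ≤ x + 1 := by
      gcongr
      exact_mod_cast Nat.lt_succ_iff.1 (mem_range.1 hn)
    have hpartial : |∑ m ∈ range (n + 1), d m| ≤ T :=
      (abs_sum_le_sum_abs _ _).trans <| sum_le_sum_of_subset_of_nonneg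
        (range_subset_range.2 (by simpa using hn)) fun _ _ _ => abs_nonneg _
    have hd : ((n : ℝ) + 1) ^ 2 * d n ^ 2 ≤ C * ((x : ℝ) + 1) ^ (2 + α) * |d n| := by
      calc ((n : ℝ) + 1) ^ 2 * d n ^ 2 = ((n : ℝ) + 1) ^ 2 * |d n| * |d n| := by
            rw [mul_assoc, ← sq, sq_abs]
        _ ≤ ((x : ℝ) + 1) ^ 2 * (C * ((x : ℝ) + 1) ^ α) * |d n| := by
            gcongr
            exact (hC n).trans (by gcongr)
        _ = C * ((x : ℝ) + 1) ^ (2 + α) * |d n| := by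
            rw [Real.rpow_add (by positivity), Real.rpow_two]
            ring
    nlinarith [sq_abs (∑ m ∈ range (n + 1), d m), abs_nonneg (∑ m ∈ range (n + 1), d m),
      sq_nonneg ((n + 1) * d n + ∑ m ∈ range (n + 1), d m)]
  calc _ ≤ ∑ n ∈ range (x + 1), (2 * C * ((x : ℝ) + 1) ^ (2 + α) * |d n| + 2 * T ^ 2) :=
        sum_le_sum hterm
    _ = _ := by
      rw [sum_add_distrib, ← mul_sum, sum_const, card_range, nsmul_eq_mul]
      push_cast
      ring

lemma isBigO_natCast_add_one_rpow {r : ℝ} (hr : 0 ≤ r) :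
    (fun x : ℕ => ((x : ℝ) + 1) ^ r) =O[atTop] fun x : ℕ => (x : ℝ) ^ r := by
  refine IsBigO.of_bound (2 ^ r) ((eventually_ge_atTop 1).mono fun x hx => ?_)
  have hx : (1 : ℝ) ≤ x := by exact_mod_cast hx
  rw [Real.norm_of_nonneg (by positivity), Real.norm_of_nonneg (by positivity),
    ← Real.mul_rpow (by norm_num) (by positivity)]
  gcongr
  linarith

lemma isBigO_natCast_rpow_mul_rpow {a b c : ℝ} (h : a + b ≤ c) :
    (fun x : ℕ => (x : ℝ) ^ a * (x : ℝ) ^ b) =O[atTop] fun x : ℕ => (x : ℝ) ^ c := by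
  refine IsBigO.of_bound 1 ((eventually_ge_atTop 1).mono fun x hx => ?_)
  have hx : (1 : ℝ) ≤ x := by exact_mod_cast hx
  rw [Real.norm_of_nonneg (by positivity), Real.norm_of_nonneg (by positivity), one_mul,
    ← Real.rpow_add (by positivity)]
  exact Real.rpow_le_rpow_of_exponent_le hx h

theorem isLittleO_sum_sq_succ_mul_sub_sum {d : ℕ → ℝ} {α γ : ℝ} (hα : 0 ≤ α) (hγ : γ ≤ 1 + α)
    (hd : d =O[atTop] fun n : ℕ => (n : ℝ) ^ α)
    (hT : (fun x : ℕ => ∑ n ∈ range (x + 1), |d n|) =o[atTop] fun x : ℕ => (x : ℝ) ^ γ) :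
    (fun x : ℕ => ∑ n ∈ range (x + 1), ((n + 1) * d n - ∑ m ∈ range (n + 1), d m) ^ 2)
      =o[atTop] fun x : ℕ => (x : ℝ) ^ (2 + α + γ) := by
  obtain ⟨C, hC⟩ : ∃ C, ∀ n, |d n| ≤ C * ((n : ℝ) + 1) ^ α := by
    have hd' : d =O[atTop] fun n : ℕ => ((n : ℝ) + 1) ^ α :=
      hd.trans <| isBigO_of_le _ fun n => by
        rw [Real.norm_of_nonneg (by positivity), Real.norm_of_nonneg (by positivity)]
        gcongr
        linarith
    obtain ⟨C, hC⟩ := (isBigO_nat_atTop_iff fun n h => absurd h (by positivity)).1 hd'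
    refine ⟨C, fun n => ?_⟩
    simpa [Real.norm_of_nonneg (by positivity : (0 : ℝ) ≤ ((n : ℝ) + 1) ^ α)] using hC n
  have hfirst := ((isBigO_natCast_add_one_rpow (by linarith : (0 : ℝ) ≤ 2 + α)).const_mul_left
    (2 * C)).mul_isLittleO hT |>.trans_isBigO (isBigO_natCast_rpow_mul_rpow le_rfl)
  have hsecond := ((isBigO_natCast_add_one_rpow zero_le_one).const_mul_left 2).mul_isLittleO
    ((hT.mul hT).trans_isBigO (isBigO_natCast_rpow_mul_rpow le_rfl))
    |>.trans_isBigO (isBigO_natCast_rpow_mul_rpow (c := 2 + α + γ) (by linarith))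
  refine IsBigO.trans_isLittleO (isBigO_of_le _ fun x => ?_) (hfirst.add hsecond)
  rw [Real.norm_of_nonneg (sum_nonneg fun _ _ => sq_nonneg _), Real.rpow_one, ← sq]
  exact (sum_sq_succ_mul_sub_sum_le hα hC x).trans (le_abs_self _)

theorem stmt8 (β α : ℝ) (hβ0 : 0 < β) (hβ1 : β ≤ 1 / 2)
    (hα0 : 0 ≤ α) (hα1 : α ≤ β / 2)
    (A B : Set ℕ) (hA : A.Infinite) (hB : B.Infinite)
    (h1 : (fun i : ℕ => (Nat.nth (· ∈ A) i : ℝ) - (Nat.nth (· ∈ B) i : ℝ))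
      =o[atTop] fun i : ℕ => (Nat.nth (· ∈ A) i : ℝ) ^ (β - α))
    (h2 : (fun n : ℕ => (countFn A n : ℝ) - (countFn B n : ℝ))
      =O[atTop] fun n : ℕ => (n : ℝ) ^ α)
    (h3 : ∃ c : ℝ, 0 < c ∧ ∀ n : ℕ,
      (countFn A n : ℝ) ≤ c * (n : ℝ) ^ β ∧ (countFn B n : ℝ) ≤ c * (n : ℝ) ^ β) :
    (fun x : ℕ => ∑ n ∈ Finset.range (x + 1), (sumFn A n - sumFn B n) ^ 2)
      =o[atTop] fun x : ℕ => (x : ℝ) ^ (2 + 2 * β) := by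
  have hK : (fun x : ℕ => (max (countFn A x) (countFn B x) : ℝ)) =O[atTop]
      fun x : ℕ => (x : ℝ) ^ β := by
    obtain ⟨c, -, hc⟩ := h3
    refine IsBigO.of_bound c (Eventually.of_forall fun x => ?_)
    rw [Real.norm_of_nonneg (by positivity), Real.norm_of_nonneg (by positivity)]
    exact max_le (hc x).1 (hc x).2
  have hT : (fun x : ℕ => ∑ n ∈ range (x + 1), |(countFn A n : ℝ) - countFn B n|)
      =o[atTop] fun x : ℕ => (x : ℝ) ^ (2 * β - α) := by
    have hG := isLittleO_sum_abs_nth_sub hβ0.le (by linarith) (by linarith) h1 hK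
    rw [show β + (β - α) = 2 * β - α by ring] at hG
    refine IsBigO.trans_isLittleO (isBigO_of_le _ fun x => ?_) hG
    rw [Real.norm_of_nonneg (sum_nonneg fun _ _ => abs_nonneg _),
      Real.norm_of_nonneg (sum_nonneg fun _ _ => abs_nonneg _)]
    exact sum_abs_countFn_sub_le hA hB x
  have hS : ∀ n : ℕ, sumFn A n - sumFn B n = (n + 1) * ((countFn A n : ℝ) - countFn B n)
      - ∑ m ∈ range (n + 1), ((countFn A m : ℝ) - countFn B m) := fun n => by
    rw [sumFn_eq_mul_countFn_sub_sum, sumFn_eq_mul_countFn_sub_sum, sum_sub_distrib]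
    ring
  simp_rw [hS]
  convert isLittleO_sum_sq_succ_mul_sub_sum hα0 (by linarith) h2 hT using 3
  ring
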